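/- Let X be a semi-inner-product space and Z ⊆ X a linear subspace. Define the quotient seminorm on X/Z by ‖π(x)‖ = inf_{z∈Z} ‖x+z‖, where π : X → X/Z is the quotient map. Then this quotient seminorm satisfies the parallelogram identity: ‖u+v‖² + ‖u−v‖² = 2‖u‖² + 2‖v‖² for all u, v ∈ X/Z; consequently it arises from a semi-inner-product on X/Z. -/

import Mathlib

/-!
Lifting `u, v` to representatives `x, y` of norm at most `‖u‖ + ε`, `‖v‖ + ε` and using
`‖π w‖ ≤ ‖w‖` for `w = x ± y` gives the parallelogram law for the quotient norm as an inequality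
`≤`; applied to `u + v, u - v` together with homogeneity it gives `≥`. A seminorm satisfying the
parallelogram law descends to a norm on the separation quotient, which then carries an inner product
by the Jordan–von Neumann theorem; pulling it back gives the semi-inner-product on `X ⧸ Z`.
-/

open Filter Topology

theorem norm_add_sq_add_norm_sub_sq_eq_of_le {𝕜 E : Type*} [RCLike 𝕜] [SeminormedAddCommGroup E]
    [NormedSpace 𝕜 E]
    (h : ∀ u v : E, ‖u + v‖ ^ 2 + ‖u - v‖ ^ 2 ≤ 2 * ‖u‖ ^ 2 + 2 * ‖v‖ ^ 2) (u v : E) :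
    ‖u + v‖ ^ 2 + ‖u - v‖ ^ 2 = 2 * ‖u‖ ^ 2 + 2 * ‖v‖ ^ 2 := by
  refine (h u v).antisymm ?_
  have hsum : (u + v) + (u - v) = (2 : 𝕜) • u := by rw [two_smul]; abel
  have hdiff : (u + v) - (u - v) = (2 : 𝕜) • v := by rw [two_smul]; abel
  have := h (u + v) (u - v)
  rw [hsum, hdiff, norm_smul, norm_smul, RCLike.norm_two] at this
  linarith

theorem Submodule.Quotient.norm_mk_eq_iInf {R M : Type*} [Ring R] [SeminormedAddCommGroup M]
    [Module R M] {S : Submodule R M} (x : M) :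
    ‖(mk x : M ⧸ S)‖ = ⨅ s : S, ‖x + s‖ :=
  (quotient_norm_mk_eq S.toAddSubgroup x).trans sInf_image'

namespace QuotientAddGroup

variable {M : Type*} [SeminormedAddCommGroup M] {S : AddSubgroup M}

theorem norm_add_sq_add_norm_sub_sq_le
    (hpar : ∀ x y : M, ‖x + y‖ ^ 2 + ‖x - y‖ ^ 2 ≤ 2 * ‖x‖ ^ 2 + 2 * ‖y‖ ^ 2) (u v : M ⧸ S) :
    ‖u + v‖ ^ 2 + ‖u - v‖ ^ 2 ≤ 2 * ‖u‖ ^ 2 + 2 * ‖v‖ ^ 2 := by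
  set bound : ℝ → ℝ := fun ε ↦ 2 * (‖u‖ + ε) ^ 2 + 2 * (‖v‖ + ε) ^ 2
  have hbound : ∀ ε > 0, ‖u + v‖ ^ 2 + ‖u - v‖ ^ 2 ≤ bound ε := by
    intro ε hε
    obtain ⟨x, rfl, hx⟩ := exists_norm_mk_lt u hε
    obtain ⟨y, rfl, hy⟩ := exists_norm_mk_lt v hε
    have hadd : ‖(x + y : M ⧸ S)‖ ≤ ‖x + y‖ := norm_mk_le_norm
    have hsub : ‖(x - y : M ⧸ S)‖ ≤ ‖x - y‖ := norm_mk_le_norm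
    calc ‖(x : M ⧸ S) + y‖ ^ 2 + ‖(x : M ⧸ S) - y‖ ^ 2
        ≤ ‖x + y‖ ^ 2 + ‖x - y‖ ^ 2 := by gcongr
      _ ≤ 2 * ‖x‖ ^ 2 + 2 * ‖y‖ ^ 2 := hpar x y
      _ ≤ bound ε := by simp only [bound]; gcongr
  have hlim : Tendsto bound (𝓝[>] 0) (𝓝 (2 * ‖u‖ ^ 2 + 2 * ‖v‖ ^ 2)) := by
    have : Continuous bound := by fun_prop
    simpa [bound] using (this.tendsto 0).mono_left nhdsWithin_le_nhds
  exact ge_of_tendsto hlim (eventually_nhdsWithin_of_forall hbound)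

end QuotientAddGroup

theorem exists_sesq_eq_norm_sq_of_parallelogram {𝕜 E : Type*} [RCLike 𝕜]
    [SeminormedAddCommGroup E] [NormedSpace 𝕜 E]
    (hpar : ∀ u v : E, ‖u + v‖ ^ 2 + ‖u - v‖ ^ 2 = 2 * ‖u‖ ^ 2 + 2 * ‖v‖ ^ 2) :
    ∃ B : E → E → 𝕜,
      (∀ u v w : E, B (u + v) w = B u w + B v w) ∧
      (∀ (c : 𝕜) (u v : E), B (c • u) v = c * B u v) ∧
      (∀ u v : E, B v u = (starRingEnd 𝕜) (B u v)) ∧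
      (∀ u : E, B u u = ((‖u‖ ^ 2 : ℝ) : 𝕜)) := by
  have : InnerProductSpaceable (SeparationQuotient E) := ⟨fun a b ↦ by
    obtain ⟨u, rfl⟩ := SeparationQuotient.surjective_mk a
    obtain ⟨v, rfl⟩ := SeparationQuotient.surjective_mk b
    simp only [← SeparationQuotient.mk_add, ← SeparationQuotient.mk_sub,
      SeparationQuotient.norm_mk, ← sq]
    linarith [hpar u v]⟩
  let _ : InnerProductSpace 𝕜 (SeparationQuotient E) :=
    .ofNorm 𝕜 InnerProductSpaceable.parallelogram_identity
  refine ⟨fun u v ↦ inner 𝕜 (SeparationQuotient.mk v) (SeparationQuotient.mk u),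
    fun u v w ↦ ?_, fun c u v ↦ ?_, fun u v ↦ (inner_conj_symm _ _).symm, fun u ↦ ?_⟩
  · simp only [SeparationQuotient.mk_add, inner_add_right]
  · simp only [SeparationQuotient.mk_smul, inner_smul_right]
  · simp only [inner_self_eq_norm_sq_to_K, SeparationQuotient.norm_mk, RCLike.ofReal_pow]

/-- The quotient seminorm `‖π(x)‖ = inf_{z ∈ Z} ‖x + z‖` on `X/Z`, where the
seminorm of `X` comes from a semi-inner-product (equivalently, satisfies the
parallelogram identity), itself satisfies the parallelogram identity;
consequently it arises from a semi-inner-product on `X/Z`. -/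
theorem quotient_seminorm_parallelogram {X : Type*} [SeminormedAddCommGroup X]
    [NormedSpace ℂ X]
    (hpar : ∀ x y : X, ‖x + y‖ ^ 2 + ‖x - y‖ ^ 2 = 2 * ‖x‖ ^ 2 + 2 * ‖y‖ ^ 2)
    (Z : Submodule ℂ X)
    (q : X → ℝ) (hq : ∀ x : X, q x = ⨅ z : Z, ‖x + (z : X)‖) :
    (∀ x y : X, q (x + y) ^ 2 + q (x - y) ^ 2 = 2 * q x ^ 2 + 2 * q y ^ 2) ∧
    ∃ Bq : (X ⧸ Z) → (X ⧸ Z) → ℂ,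
      (∀ u v w : X ⧸ Z, Bq (u + v) w = Bq u w + Bq v w) ∧
      (∀ (c : ℂ) (u v : X ⧸ Z), Bq (c • u) v = c * Bq u v) ∧
      (∀ u v : X ⧸ Z, Bq v u = (starRingEnd ℂ) (Bq u v)) ∧
      (∀ x : X, Bq (Submodule.Quotient.mk x) (Submodule.Quotient.mk x)
          = ((q x ^ 2 : ℝ) : ℂ)) := by
  have hq_norm (x : X) : q x = ‖(Submodule.Quotient.mk x : X ⧸ Z)‖ :=
    (hq x).trans (Submodule.Quotient.norm_mk_eq_iInf x).symm
  have hpar_quot : ∀ u v : X ⧸ Z, ‖u + v‖ ^ 2 + ‖u - v‖ ^ 2 = 2 * ‖u‖ ^ 2 + 2 * ‖v‖ ^ 2 :=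
    norm_add_sq_add_norm_sub_sq_eq_of_le (𝕜 := ℂ) <|
      QuotientAddGroup.norm_add_sq_add_norm_sub_sq_le (S := Z.toAddSubgroup) fun x y ↦ (hpar x y).le
  obtain ⟨B, hadd, hsmul, hconj, hnorm⟩ :=
    exists_sesq_eq_norm_sq_of_parallelogram (𝕜 := ℂ) hpar_quot
  refine ⟨fun x y ↦ ?_, B, hadd, hsmul, hconj, fun x ↦ ?_⟩
  · simpa only [hq_norm, Submodule.Quotient.mk_add, Submodule.Quotient.mk_sub] using
      hpar_quot (Submodule.Quotient.mk x) (Submodule.Quotient.mk y)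
  · rw [hnorm, hq_norm, RCLike.ofReal_eq_complex_ofReal]
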